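/- Let V : ℝ^d → ℝ be continuous and bounded above, and let E ∈ ℝ. Let 𝒢 ⊂ ℝ^d be a closed set and define d_𝒢(x) = inf_{y ∈ 𝒢} d_E(x,y). Then at every point x ∈ ℝ^d at which d_𝒢 is differentiable, the gradient satisfies ∂d_𝒢(x) ∈ K_x, where K_x = {ξ ∈ ℝ^d : Σ_{j=1}^d sinh²(ξ_j/2) ≤ (V(x)−E)₊/4}. In particular, since d_𝒢 is Lipschitz, ∂d_𝒢(x) ∈ K_x for almost every x ∈ ℝ^d. -/

import Mathlib

open MeasureTheory

noncomputable section

/-- The convex body `K_x = {ξ : Σ_j sinh²(ξ_j/2) ≤ (V(x)−E)₊/4}` of the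
Agmon–Finsler metric at energy `E`. -/
def Kx {d : ℕ} (V : EuclideanSpace ℝ (Fin d) → ℝ) (E : ℝ)
    (x : EuclideanSpace ℝ (Fin d)) : Set (EuclideanSpace ℝ (Fin d)) :=
  {ξ | ∑ j, Real.sinh (ξ j / 2) ^ 2 ≤ max (V x - E) 0 / 4}

/-- The Agmon–Finsler metric `L(x,v) = sup_{ξ ∈ K_x} ⟨ξ, v⟩`. -/
def Lmet {d : ℕ} (V : EuclideanSpace ℝ (Fin d) → ℝ) (E : ℝ)
    (x v : EuclideanSpace ℝ (Fin d)) : ℝ :=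
  sSup {r | ∃ ξ ∈ Kx V E x, r = (inner ℝ ξ v : ℝ)}

/-- The Agmon–Finsler pseudo-distance `d_E(x,y)`, the infimum of the lengths
`∫₀¹ L(γ(t), γ'(t)) dt` over C¹ curves from `x` to `y`. -/
def agmonDist {d : ℕ} (V : EuclideanSpace ℝ (Fin d) → ℝ) (E : ℝ)
    (x y : EuclideanSpace ℝ (Fin d)) : ℝ :=
  sInf {r | ∃ γ : ℝ → EuclideanSpace ℝ (Fin d), ContDiff ℝ 1 γ ∧ γ 0 = x ∧ γ 1 = y ∧
    r = ∫ t in (0:ℝ)..1, Lmet V E (γ t) (deriv γ t)}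

/-- The Agmon–Finsler distance `d_𝒢(x) = inf_{y ∈ 𝒢} d_E(x,y)` to a set `𝒢`. -/
def distToSet {d : ℕ} (V : EuclideanSpace ℝ (Fin d) → ℝ) (E : ℝ)
    (G : Set (EuclideanSpace ℝ (Fin d))) (x : EuclideanSpace ℝ (Fin d)) : ℝ :=
  sInf {r | ∃ y ∈ G, r = agmonDist V E x y}

open Real Set Filter Topology
open scoped RealInnerProductSpace Pointwise

/-!
`L(x, ·)` is the support function of the closed convex symmetric body `K_x`, and `d_E` obeys the
triangle inequality: two curves can be concatenated after monotone `C¹` reparametrizations, which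
leave lengths unchanged because `L(x, ·)` is positively homogeneous. Hence
`d_𝒢(x) ≤ d_E(x, z) + d_𝒢(z)`, and along a short segment `d_E(x, x + s h) ≤ s (L(x, h) + o(1))`
since `L` is continuous. At a point of differentiability this gives `⟨∇d_𝒢(x), w⟩ ≤ L(x, w)` for
every `w`, and separating `∇d_𝒢(x)` from `K_x` by Hahn–Banach shows `∇d_𝒢(x) ∈ K_x`. Finally
`L(x, v) ≤ R ‖v‖` uniformly because `V` is bounded above, so `d_𝒢` is Lipschitz and Rademacher's
theorem gives the almost-everywhere statement.
-/

section SupportFunction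

variable {F : Type*} [NormedAddCommGroup F] [InnerProductSpace ℝ F]

def supportFun (K : Set F) (v : F) : ℝ := sSup {r | ∃ ξ ∈ K, r = ⟪ξ, v⟫}

variable {K K' : Set F} {R : ℝ}

lemma supportFun_smul (K : Set F) {s : ℝ} (hs : 0 ≤ s) (v : F) :
    supportFun K (s • v) = s * supportFun K v := by
  have : {r | ∃ ξ ∈ K, r = ⟪ξ, s • v⟫} = s • {r | ∃ ξ ∈ K, r = ⟪ξ, v⟫} := by
    ext r
    simp only [Set.mem_smul_set, mem_ofPred_eq, real_inner_smul_right, smul_eq_mul]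
    constructor
    · rintro ⟨ξ, hξ, rfl⟩; exact ⟨_, ⟨ξ, hξ, rfl⟩, rfl⟩
    · rintro ⟨_, ⟨ξ, hξ, rfl⟩, rfl⟩; exact ⟨ξ, hξ, rfl⟩
  rw [supportFun, this, Real.sSup_smul_of_nonneg hs, smul_eq_mul, supportFun]

lemma supportFun_neg (hK : ∀ ξ ∈ K, -ξ ∈ K) (v : F) : supportFun K (-v) = supportFun K v := by
  have key : ∀ w : F, {r | ∃ ξ ∈ K, r = ⟪ξ, -w⟫} ⊆ {r | ∃ ξ ∈ K, r = ⟪ξ, w⟫} := by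
    rintro w _ ⟨ξ, hξ, rfl⟩
    exact ⟨-ξ, hK ξ hξ, by rw [inner_neg_left, inner_neg_right]⟩
  rw [supportFun, supportFun, (key v).antisymm (by simpa using key (-v))]

lemma real_inner_le_mul_norm {ξ : F} (hξ : ‖ξ‖ ≤ R) (v : F) : ⟪ξ, v⟫ ≤ R * ‖v‖ :=
  (real_inner_le_norm ξ v).trans (mul_le_mul_of_nonneg_right hξ (norm_nonneg v))

lemma bddAbove_inner_image (hK : ∀ ξ ∈ K, ‖ξ‖ ≤ R) (v : F) :
    BddAbove {r | ∃ ξ ∈ K, r = ⟪ξ, v⟫} :=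
  ⟨R * ‖v‖, fun _ ⟨ξ, hξ, hr⟩ => hr ▸ real_inner_le_mul_norm (hK ξ hξ) v⟩

lemma inner_le_supportFun (hK : ∀ ξ ∈ K, ‖ξ‖ ≤ R) {ξ : F} (hξ : ξ ∈ K) (v : F) :
    ⟪ξ, v⟫ ≤ supportFun K v :=
  le_csSup (bddAbove_inner_image hK v) ⟨ξ, hξ, rfl⟩

lemma supportFun_le (hK : ∀ ξ ∈ K, ‖ξ‖ ≤ R) (hR : 0 ≤ R) (v : F) :
    supportFun K v ≤ R * ‖v‖ :=
  Real.sSup_le (fun _ ⟨ξ, hξ, hr⟩ => hr ▸ real_inner_le_mul_norm (hK ξ hξ) v) (by positivity)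

lemma supportFun_le_add (hK : ∀ ξ ∈ K, ‖ξ‖ ≤ R) (hne : K.Nonempty) (v w : F) :
    supportFun K v ≤ supportFun K w + R * ‖v - w‖ := by
  obtain ⟨ξ₀, hξ₀⟩ := hne
  refine csSup_le ⟨_, ξ₀, hξ₀, rfl⟩ ?_
  rintro _ ⟨ξ, hξ, rfl⟩
  calc ⟪ξ, v⟫ = ⟪ξ, w⟫ + ⟪ξ, v - w⟫ := by rw [← inner_add_right, add_sub_cancel]
    _ ≤ supportFun K w + R * ‖v - w‖ :=
      add_le_add (inner_le_supportFun hK hξ w) (real_inner_le_mul_norm (hK ξ hξ) _)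

lemma supportFun_mono (hK' : ∀ ξ ∈ K', ‖ξ‖ ≤ R) (hne : K.Nonempty) (h : K ⊆ K') (v : F) :
    supportFun K v ≤ supportFun K' v := by
  obtain ⟨ξ₀, hξ₀⟩ := hne
  refine csSup_le ⟨_, ξ₀, hξ₀, rfl⟩ ?_
  rintro _ ⟨ξ, hξ, rfl⟩
  exact inner_le_supportFun hK' (h hξ) v

lemma mul_supportFun_le (hK : ∀ ξ ∈ K, ‖ξ‖ ≤ R) (hne : K'.Nonempty) {s : ℝ} (hs : 0 ≤ s)
    (h : s • K' ⊆ K) (v : F) : s * supportFun K' v ≤ supportFun K v := by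
  rw [← supportFun_smul K' hs]
  obtain ⟨ξ₀, hξ₀⟩ := hne
  refine csSup_le ⟨_, ξ₀, hξ₀, rfl⟩ ?_
  rintro _ ⟨ξ, hξ, rfl⟩
  rw [real_inner_smul_right, ← real_inner_smul_left]
  exact inner_le_supportFun hK (h (smul_mem_smul_set hξ)) v

lemma mem_of_forall_inner_le_supportFun [CompleteSpace F] (hconv : Convex ℝ K)
    (hclosed : IsClosed K) (hne : K.Nonempty) {ξ : F} (h : ∀ w, ⟪ξ, w⟫ ≤ supportFun K w) :
    ξ ∈ K := by
  by_contra hξ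
  obtain ⟨f, u, hfK, hfξ⟩ := geometric_hahn_banach_closed_point hconv hclosed hξ
  set w := (InnerProductSpace.toDual ℝ F).symm f
  have hf : ∀ a, f a = ⟪a, w⟫ := fun a => by
    rw [real_inner_comm]; exact InnerProductSpace.toDual_symm_apply.symm
  obtain ⟨ζ, hζ⟩ := hne
  have : supportFun K w ≤ u :=
    csSup_le ⟨_, ζ, hζ, rfl⟩ fun _ ⟨a, ha, hr⟩ => hr ▸ (hf a ▸ hfK a ha).le
  linarith [h w, hf ξ]

end SupportFunction

section AgmonBody

variable {ι : Type*} [Fintype ι]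

def agmonBody (c : ℝ) : Set (EuclideanSpace ℝ ι) := {ξ | ∑ j, sinh (ξ j / 2) ^ 2 ≤ c}

lemma convexOn_sinh_half_sq : ConvexOn ℝ univ fun t : ℝ => sinh (t / 2) ^ 2 := by
  have hcosh : ConvexOn ℝ univ cosh :=
    Monotone.convexOn_univ_of_deriv differentiable_cosh (by simpa using sinh_strictMono.monotone)
  refine ((hcosh.smul (by norm_num : (0:ℝ) ≤ 1 / 2)).add_const (-1 / 2)).congr fun t _ => ?_
  have h := cosh_two_mul (t / 2)
  rw [mul_div_cancel₀ t two_ne_zero, cosh_sq] at h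
  simp only [Pi.add_apply, smul_eq_mul, h]
  ring

lemma convexOn_sum_sinh_half_sq :
    ConvexOn ℝ univ fun ξ : EuclideanSpace ℝ ι => ∑ j, sinh (ξ j / 2) ^ 2 := by
  refine ⟨convex_univ, fun ξ _ ζ _ a b ha hb hab => ?_⟩
  calc ∑ j, sinh ((a • ξ + b • ζ) j / 2) ^ 2
      ≤ ∑ j, (a * sinh (ξ j / 2) ^ 2 + b * sinh (ζ j / 2) ^ 2) :=
        Finset.sum_le_sum fun j _ =>
          convexOn_sinh_half_sq.2 (mem_univ (ξ j)) (mem_univ (ζ j)) ha hb hab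
    _ = a • ∑ j, sinh (ξ j / 2) ^ 2 + b • ∑ j, sinh (ζ j / 2) ^ 2 := by
        simp only [Finset.sum_add_distrib, Finset.mul_sum, smul_eq_mul]

lemma convex_agmonBody (c : ℝ) : Convex ℝ (agmonBody c : Set (EuclideanSpace ℝ ι)) := by
  simpa [agmonBody] using convexOn_sum_sinh_half_sq.convex_le c

lemma isClosed_agmonBody (c : ℝ) : IsClosed (agmonBody c : Set (EuclideanSpace ℝ ι)) :=
  isClosed_le (by fun_prop) continuous_const

lemma zero_mem_agmonBody {c : ℝ} (hc : 0 ≤ c) : (0 : EuclideanSpace ℝ ι) ∈ agmonBody c := by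
  simpa [agmonBody] using hc

lemma neg_mem_agmonBody {c : ℝ} {ξ : EuclideanSpace ℝ ι} (hξ : ξ ∈ agmonBody c) :
    -ξ ∈ agmonBody c := by
  simpa [agmonBody, neg_div] using hξ

lemma smul_mem_agmonBody {c s : ℝ} (hs₀ : 0 ≤ s) (hs₁ : s ≤ 1) {ξ : EuclideanSpace ℝ ι}
    (hξ : ξ ∈ agmonBody c) : s • ξ ∈ agmonBody (s * c) := by
  have h := convexOn_sum_sinh_half_sq.2 (mem_univ ξ) (mem_univ 0) hs₀ (sub_nonneg.2 hs₁)
    (add_sub_cancel s 1)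
  simp only [smul_zero, add_zero, PiLp.zero_apply, zero_div, sinh_zero, smul_eq_mul] at h
  have hξ' : ∑ j, sinh (ξ j / 2) ^ 2 ≤ c := hξ
  exact h.trans (by simpa using mul_le_mul_of_nonneg_left hξ' hs₀)

lemma norm_le_of_mem_agmonBody (c : ℝ) :
    ∀ ξ ∈ (agmonBody c : Set (EuclideanSpace ℝ ι)), ‖ξ‖ ≤ 2 * √c := by
  intro ξ hξ
  have hcoord : ∀ j, ξ j ^ 2 ≤ 4 * sinh (ξ j / 2) ^ 2 := fun j => by
    have : |ξ j / 2| ≤ |sinh (ξ j / 2)| := by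
      rw [abs_sinh]; exact self_le_sinh_iff.2 (abs_nonneg _)
    nlinarith [sq_le_sq.2 this]
  have hsq : ‖ξ‖ ^ 2 ≤ 4 * c := by
    rw [EuclideanSpace.real_norm_sq_eq]
    calc ∑ j, ξ j ^ 2 ≤ ∑ j, 4 * sinh (ξ j / 2) ^ 2 := Finset.sum_le_sum fun j _ => hcoord j
      _ ≤ 4 * c := by rw [← Finset.mul_sum]; linarith [show ∑ j, sinh (ξ j / 2) ^ 2 ≤ c from hξ]
  calc ‖ξ‖ ≤ √(4 * c) := Real.le_sqrt_of_sq_le hsq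
    _ = 2 * √c := by
      rw [sqrt_mul (by norm_num), show (4:ℝ) = 2 ^ 2 by norm_num, sqrt_sq two_pos.le]

end AgmonBody

section AgmonSupport

variable {ι : Type*} [Fintype ι]

lemma supportFun_agmonBody_nonneg {c : ℝ} (hc : 0 ≤ c) (v : EuclideanSpace ℝ ι) :
    0 ≤ supportFun (agmonBody c) v := by
  simpa using inner_le_supportFun (norm_le_of_mem_agmonBody c) (zero_mem_agmonBody hc) v

lemma supportFun_agmonBody_le (c : ℝ) (v : EuclideanSpace ℝ ι) :
    supportFun (agmonBody c) v ≤ 2 * √c * ‖v‖ :=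
  supportFun_le (norm_le_of_mem_agmonBody c) (by positivity) v

lemma supportFun_agmonBody_neg (c : ℝ) (v : EuclideanSpace ℝ ι) :
    supportFun (agmonBody c) (-v) = supportFun (agmonBody c) v := by
  have hK : ∀ ξ ∈ (agmonBody c : Set (EuclideanSpace ℝ ι)), -ξ ∈ agmonBody c :=
    fun _ => neg_mem_agmonBody
  exact supportFun_neg hK v

lemma supportFun_agmonBody_mono {c c' : ℝ} (hc : 0 ≤ c) (h : c ≤ c') (v : EuclideanSpace ℝ ι) :
    supportFun (agmonBody c) v ≤ supportFun (agmonBody c') v :=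
  supportFun_mono (norm_le_of_mem_agmonBody c') ⟨0, zero_mem_agmonBody hc⟩
    (fun _ hξ => le_trans hξ h) v

/-- Shrinking `agmonBody c'` by the factor `c / c'` lands in `agmonBody c`. -/
lemma supportFun_agmonBody_le_add {c c' : ℝ} (hc : 0 ≤ c) (h : c ≤ c')
    (v : EuclideanSpace ℝ ι) :
    supportFun (agmonBody c') v ≤ supportFun (agmonBody c) v + 2 * √(c' - c) * ‖v‖ := by
  rcases (hc.trans h).eq_or_lt with hc' | hc'
  · obtain rfl : c = c' := le_antisymm h (hc'.symm ▸ hc)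
    simp
  set s := c / c'
  have hs₀ : 0 ≤ s := div_nonneg hc hc'.le
  have hs₁ : s ≤ 1 := div_le_one_of_le₀ h hc'.le
  have hscale : s * supportFun (agmonBody c') v ≤ supportFun (agmonBody c) v := by
    refine mul_supportFun_le (norm_le_of_mem_agmonBody c) ⟨0, zero_mem_agmonBody hc'.le⟩ hs₀ ?_ v
    rintro _ ⟨ξ, hξ, rfl⟩
    simpa [s, div_mul_cancel₀ c hc'.ne'] using smul_mem_agmonBody hs₀ hs₁ hξ
  have hbound := supportFun_agmonBody_le c' v
  have hfactor : (1 - s) * √c' ≤ √(c' - c) := by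
    have hsq : √(c' - c) ^ 2 = c' - c := sq_sqrt (sub_nonneg.2 h)
    have hsq' : √c' ^ 2 = c' := sq_sqrt hc'.le
    have hmono : √(c' - c) ≤ √c' := sqrt_le_sqrt (by linarith)
    have hpos : 0 < √c' := sqrt_pos.2 hc'
    rw [show (1 - s) * √c' = √(c' - c) ^ 2 / √c' by
      rw [hsq, eq_div_iff hpos.ne', mul_assoc, ← sq, hsq', sub_mul, one_mul,
        div_mul_cancel₀ c hc'.ne']]
    rw [div_le_iff₀ hpos, sq]
    exact mul_le_mul_of_nonneg_left hmono (sqrt_nonneg _)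
  nlinarith [norm_nonneg v, sqrt_nonneg c']

lemma abs_supportFun_agmonBody_sub_agmonBody_le {c c' : ℝ} (hc : 0 ≤ c) (hc' : 0 ≤ c')
    (v : EuclideanSpace ℝ ι) :
    |supportFun (agmonBody c) v - supportFun (agmonBody c') v| ≤ 2 * √|c - c'| * ‖v‖ := by
  wlog h : c ≤ c' generalizing c c'
  · rw [abs_sub_comm, abs_sub_comm c]; exact this hc' hc (le_of_not_ge h)
  rw [abs_sub_comm, abs_of_nonneg (sub_nonneg.2 (supportFun_agmonBody_mono hc h v)),
    abs_sub_comm, abs_of_nonneg (sub_nonneg.2 h)]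
  linarith [supportFun_agmonBody_le_add hc h v]

lemma abs_supportFun_agmonBody_sub_le {c : ℝ} (hc : 0 ≤ c) (v w : EuclideanSpace ℝ ι) :
    |supportFun (agmonBody c) v - supportFun (agmonBody c) w| ≤ 2 * √c * ‖v - w‖ := by
  have hne : (agmonBody c : Set (EuclideanSpace ℝ ι)).Nonempty := ⟨0, zero_mem_agmonBody hc⟩
  rw [abs_sub_le_iff]
  constructor
  · linarith [supportFun_le_add (norm_le_of_mem_agmonBody c) hne v w]
  · rw [norm_sub_rev]
    linarith [supportFun_le_add (norm_le_of_mem_agmonBody c) hne w v]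

lemma continuousOn_supportFun_agmonBody :
    ContinuousOn (fun p : ℝ × EuclideanSpace ℝ ι => supportFun (agmonBody p.1) p.2)
      (Ici 0 ×ˢ univ) := by
  rintro ⟨c₀, v₀⟩ ⟨hc₀, -⟩
  set B : ℝ × EuclideanSpace ℝ ι → ℝ := fun p => 2 * √p.1 * ‖p.2 - v₀‖ + 2 * √|p.1 - c₀| * ‖v₀‖
  have hB : Tendsto B (𝓝[Ici 0 ×ˢ univ] (c₀, v₀)) (𝓝 0) := by
    have : Continuous B := by fun_prop
    simpa [B] using (this.tendsto (c₀, v₀)).mono_left nhdsWithin_le_nhds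
  rw [ContinuousWithinAt, tendsto_iff_dist_tendsto_zero]
  refine squeeze_zero' (Eventually.of_forall fun _ => dist_nonneg) ?_ hB
  filter_upwards [self_mem_nhdsWithin] with ⟨c, v⟩ hc
  rw [Real.dist_eq]
  exact (abs_sub_le _ (supportFun (agmonBody c) v₀) _).trans (add_le_add
    (abs_supportFun_agmonBody_sub_le hc.1 v v₀)
    (abs_supportFun_agmonBody_sub_agmonBody_le hc.1 hc₀ v₀))

end AgmonSupport

lemma deriv_smoothTransition_comp_eq_zero {g : ℝ → ℝ} {t : ℝ} (ht : g t ≤ 0 ∨ 1 ≤ g t) :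
    deriv (fun s => smoothTransition (g s)) t = 0 := by
  rcases ht with ht | ht
  · refine IsLocalMin.deriv_eq_zero (Eventually.of_forall fun s => ?_)
    simp only [smoothTransition.zero_of_nonpos ht, smoothTransition.nonneg]
  · refine IsLocalMax.deriv_eq_zero (Eventually.of_forall fun s => ?_)
    simp only [smoothTransition.one_of_one_le ht, smoothTransition.le_one]

section CurveLength

variable {F : Type*} [NormedAddCommGroup F] {γ₁ γ₂ : ℝ → F}

/-- `γ₁` on `[0, 1/2]`, then `γ₂` on `[1/2, 1]`. The smooth transitions bring both pieces to rest
at the junction, which makes the concatenation `C¹`. -/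
def curveConcat (γ₁ γ₂ : ℝ → F) (t : ℝ) : F :=
  γ₁ (smoothTransition (2 * t)) + (γ₂ (smoothTransition (2 * t - 1)) - γ₂ 0)

lemma curveConcat_zero : curveConcat γ₁ γ₂ 0 = γ₁ 0 := by
  norm_num [curveConcat, smoothTransition.zero_of_nonpos (by norm_num : (-1 : ℝ) ≤ 0)]

lemma curveConcat_one (hz : γ₁ 1 = γ₂ 0) : curveConcat γ₁ γ₂ 1 = γ₂ 1 := by
  norm_num [curveConcat, smoothTransition.one_of_one_le (by norm_num : (1 : ℝ) ≤ 2), hz]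

variable [NormedSpace ℝ F] {ℓ : F → F → ℝ}

def curveLength (ℓ : F → F → ℝ) (γ : ℝ → F) : ℝ := ∫ t in (0:ℝ)..1, ℓ (γ t) (deriv γ t)

lemma contDiff_curveConcat (h₁ : ContDiff ℝ 1 γ₁) (h₂ : ContDiff ℝ 1 γ₂) :
    ContDiff ℝ 1 (curveConcat γ₁ γ₂) :=
  (h₁.comp (smoothTransition.contDiff.comp (by fun_prop))).add
    ((h₂.comp (smoothTransition.contDiff.comp (by fun_prop))).sub contDiff_const)

lemma integral_reparam_of_monotone (hℓ : ∀ p v, ∀ s : ℝ, 0 ≤ s → ℓ p (s • v) = s * ℓ p v)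
    {γ : ℝ → F} {φ : ℝ → ℝ} (hγ : Differentiable ℝ γ) (hφ : Differentiable ℝ φ)
    (hφm : Monotone φ) (a b : ℝ) :
    ∫ t in a..b, ℓ (γ (φ t)) (deriv (γ ∘ φ) t) = ∫ s in φ a..φ b, ℓ (γ s) (deriv γ s) := by
  have hnonneg : ∀ t, 0 ≤ deriv φ t := fun t => (hφ t).hasDerivAt.nonneg_of_monotone hφm
  have hint : ∀ t, ℓ (γ (φ t)) (deriv (γ ∘ φ) t) = deriv φ t • ℓ (γ (φ t)) (deriv γ (φ t)) :=
    fun t => by rw [deriv.scomp t (hγ _) (hφ t), hℓ _ _ _ (hnonneg t), smul_eq_mul]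
  simp only [hint]
  exact intervalIntegral.integral_deriv_smul_comp_of_deriv_nonneg
    (g := fun s => ℓ (γ s) (deriv γ s)) hφ.continuous.continuousOn
    (fun t _ => (hφ t).hasDerivAt) (fun t _ => hnonneg t)

lemma curveLength_curveConcat (hℓ : ∀ p v, ∀ s : ℝ, 0 ≤ s → ℓ p (s • v) = s * ℓ p v)
    (hℓc : Continuous fun q : F × F => ℓ q.1 q.2) (h₁ : ContDiff ℝ 1 γ₁)
    (h₂ : ContDiff ℝ 1 γ₂) (hz : γ₁ 1 = γ₂ 0) :
    curveLength ℓ (curveConcat γ₁ γ₂) = curveLength ℓ γ₁ + curveLength ℓ γ₂ := by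
  set φ₁ : ℝ → ℝ := fun t => smoothTransition (2 * t)
  set φ₂ : ℝ → ℝ := fun t => smoothTransition (2 * t - 1)
  have hφ₁ : Differentiable ℝ φ₁ :=
    (smoothTransition.contDiff.comp (by fun_prop)).differentiable one_ne_zero
  have hφ₂ : Differentiable ℝ φ₂ :=
    (smoothTransition.contDiff.comp (by fun_prop)).differentiable one_ne_zero
  have hφ₁m : Monotone φ₁ := smoothTransition.monotone.comp fun _ _ h => by linarith
  have hφ₂m : Monotone φ₂ := smoothTransition.monotone.comp fun _ _ h => by linarith
  have hd₁ := h₁.differentiable one_ne_zero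
  have hd₂ := h₂.differentiable one_ne_zero
  have hderiv (t : ℝ) : deriv (curveConcat γ₁ γ₂) t =
      deriv φ₁ t • deriv γ₁ (φ₁ t) + deriv φ₂ t • deriv γ₂ (φ₂ t) := by
    rw [← deriv.scomp t (hd₁ _) (hφ₁ t), ← deriv.scomp t (hd₂ _) (hφ₂ t)]
    exact (((hd₁.comp hφ₁) t).hasDerivAt.add (((hd₂.comp hφ₂) t).hasDerivAt.sub_const _)).deriv
  have hleft : EqOn (fun t => ℓ (curveConcat γ₁ γ₂ t) (deriv (curveConcat γ₁ γ₂) t))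
      (fun t => ℓ (γ₁ (φ₁ t)) (deriv (γ₁ ∘ φ₁) t)) (uIcc 0 (1 / 2)) := fun t ht => by
    have ht : 2 * t - 1 ≤ 0 := by rw [uIcc_of_le (by norm_num)] at ht; linarith [ht.2]
    have hdφ₂ : deriv φ₂ t = 0 := deriv_smoothTransition_comp_eq_zero (g := (2 * · - 1)) (.inl ht)
    simp only [curveConcat, hderiv, deriv.scomp t (hd₁ _) (hφ₁ t), hdφ₂,
      smoothTransition.zero_of_nonpos ht, zero_smul, sub_self, add_zero]
    rfl
  have hright : EqOn (fun t => ℓ (curveConcat γ₁ γ₂ t) (deriv (curveConcat γ₁ γ₂) t))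
      (fun t => ℓ (γ₂ (φ₂ t)) (deriv (γ₂ ∘ φ₂) t)) (uIcc (1 / 2) 1) := fun t ht => by
    have ht : 1 ≤ 2 * t := by rw [uIcc_of_le (by norm_num)] at ht; linarith [ht.1]
    have hdφ₁ : deriv φ₁ t = 0 := deriv_smoothTransition_comp_eq_zero (g := (2 * ·)) (.inr ht)
    simp only [curveConcat, hderiv, deriv.scomp t (hd₂ _) (hφ₂ t), hdφ₁,
      smoothTransition.one_of_one_le ht, zero_smul, zero_add, hz, add_sub_cancel]
    rfl
  have hcont : Continuous fun t => ℓ (curveConcat γ₁ γ₂ t) (deriv (curveConcat γ₁ γ₂) t) :=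
    have hη := contDiff_curveConcat h₁ h₂
    hℓc.comp (hη.continuous.prodMk (hη.continuous_deriv le_rfl))
  rw [curveLength, ← intervalIntegral.integral_add_adjacent_intervals
      (hcont.intervalIntegrable 0 (1 / 2)) (hcont.intervalIntegrable (1 / 2) 1),
    intervalIntegral.integral_congr hleft, intervalIntegral.integral_congr hright,
    integral_reparam_of_monotone hℓ hd₁ hφ₁ hφ₁m, integral_reparam_of_monotone hℓ hd₂ hφ₂ hφ₂m]
  norm_num [φ₁, φ₂, curveLength]

end CurveLength

lemma neg_inner_gradient_le_of_eventually_le {F : Type*} [NormedAddCommGroup F]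
    [InnerProductSpace ℝ F] [CompleteSpace F] {f : F → ℝ} {x : F} (hf : DifferentiableAt ℝ f x)
    (h : F) {c : ℝ} (hc : ∀ᶠ s in 𝓝[>] (0:ℝ), f x ≤ f (x + s • h) + s * c) :
    -⟪gradient f x, h⟫ ≤ c := by
  set g : ℝ → ℝ := fun s => f (x + s • h)
  have hline : HasDerivAt (fun s : ℝ => x + s • h) h 0 := by
    simpa using ((hasDerivAt_id (0:ℝ)).smul_const h).const_add x
  have hg : HasDerivAt g ⟪gradient f x, h⟫ 0 := by
    have := (hf.hasGradientAt.hasFDerivAt.comp_hasDerivAt_of_eq 0 hline (by simp))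
    simpa [g, Function.comp_def] using this
  have hslope : Tendsto (slope g 0) (𝓝[>] 0) (𝓝 ⟪gradient f x, h⟫) :=
    (hasDerivAt_iff_tendsto_slope.1 hg).mono_left (nhdsWithin_mono 0 fun _ hs => ne_of_gt hs)
  have hbound : ∀ᶠ s in 𝓝[>] (0:ℝ), -c ≤ slope g 0 s := by
    filter_upwards [hc, self_mem_nhdsWithin] with s hs (hs₀ : 0 < s)
    rw [slope_def_field, sub_zero, le_div_iff₀ hs₀]
    simp only [g, zero_smul, add_zero]
    linarith
  linarith [ge_of_tendsto hslope hbound]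

section AgmonDistance

variable {d : ℕ} {V : EuclideanSpace ℝ (Fin d) → ℝ} {E : ℝ}

def agmonLevel (V : EuclideanSpace ℝ (Fin d) → ℝ) (E : ℝ) (x : EuclideanSpace ℝ (Fin d)) : ℝ :=
  max (V x - E) 0 / 4

variable (V E) in
lemma agmonLevel_nonneg (x : EuclideanSpace ℝ (Fin d)) : 0 ≤ agmonLevel V E x := by
  unfold agmonLevel; positivity

lemma Kx_eq_agmonBody (x : EuclideanSpace ℝ (Fin d)) :
    Kx V E x = agmonBody (agmonLevel V E x) := rfl

lemma Lmet_eq_supportFun (x v : EuclideanSpace ℝ (Fin d)) :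
    Lmet V E x v = supportFun (agmonBody (agmonLevel V E x)) v := rfl

lemma Lmet_nonneg (x v : EuclideanSpace ℝ (Fin d)) : 0 ≤ Lmet V E x v := by
  rw [Lmet_eq_supportFun]
  exact supportFun_agmonBody_nonneg (agmonLevel_nonneg V E x) v

lemma Lmet_smul {s : ℝ} (hs : 0 ≤ s) (x v : EuclideanSpace ℝ (Fin d)) :
    Lmet V E x (s • v) = s * Lmet V E x v := by
  rw [Lmet_eq_supportFun, Lmet_eq_supportFun, supportFun_smul _ hs v]

lemma Lmet_neg (x v : EuclideanSpace ℝ (Fin d)) : Lmet V E x (-v) = Lmet V E x v := by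
  rw [Lmet_eq_supportFun, Lmet_eq_supportFun, supportFun_agmonBody_neg]

lemma exists_Lmet_le (hVb : BddAbove (range V)) :
    ∃ R, 0 ≤ R ∧ ∀ x v : EuclideanSpace ℝ (Fin d), Lmet V E x v ≤ R * ‖v‖ := by
  obtain ⟨B, hB⟩ := hVb
  refine ⟨2 * √(max (B - E) 0 / 4), by positivity, fun x v => ?_⟩
  rw [Lmet_eq_supportFun]
  refine (supportFun_agmonBody_le _ v).trans ?_
  unfold agmonLevel
  gcongr
  exact hB ⟨x, rfl⟩

lemma continuous_Lmet (hV : Continuous V) :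
    Continuous fun p : EuclideanSpace ℝ (Fin d) × EuclideanSpace ℝ (Fin d) => Lmet V E p.1 p.2 :=
  have hlevel : Continuous (agmonLevel V E) := by unfold agmonLevel; fun_prop
  continuousOn_supportFun_agmonBody.comp_continuous
    ((hlevel.comp continuous_fst).prodMk continuous_snd)
    fun p => ⟨agmonLevel_nonneg V E p.1, mem_univ _⟩

lemma curveLength_Lmet_nonneg (γ : ℝ → EuclideanSpace ℝ (Fin d)) :
    0 ≤ curveLength (Lmet V E) γ :=
  intervalIntegral.integral_nonneg zero_le_one fun _ _ => Lmet_nonneg _ _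

lemma agmonDist_le_curveLength {γ : ℝ → EuclideanSpace ℝ (Fin d)} (hγ : ContDiff ℝ 1 γ) :
    agmonDist V E (γ 0) (γ 1) ≤ curveLength (Lmet V E) γ := by
  refine csInf_le ⟨0, ?_⟩ ⟨γ, hγ, rfl, rfl, rfl⟩
  rintro _ ⟨γ', -, -, -, rfl⟩
  exact curveLength_Lmet_nonneg γ'

lemma le_agmonDist {x y : EuclideanSpace ℝ (Fin d)} {a : ℝ}
    (h : ∀ γ, ContDiff ℝ 1 γ → γ 0 = x → γ 1 = y → a ≤ curveLength (Lmet V E) γ) :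
    a ≤ agmonDist V E x y := by
  refine le_csInf ⟨_, fun t => x + t • (y - x), by fun_prop, by simp, by simp, rfl⟩ ?_
  rintro _ ⟨γ, hγ, h0, h1, rfl⟩
  exact h γ hγ h0 h1

lemma agmonDist_nonneg (x y : EuclideanSpace ℝ (Fin d)) : 0 ≤ agmonDist V E x y :=
  le_agmonDist fun γ _ _ _ => curveLength_Lmet_nonneg γ

lemma agmonDist_le_of_forall_mem_segment {x z : EuclideanSpace ℝ (Fin d)} {M : ℝ}
    (h : ∀ p ∈ segment ℝ x z, Lmet V E p (z - x) ≤ M) : agmonDist V E x z ≤ M := by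
  set γ : ℝ → EuclideanSpace ℝ (Fin d) := fun t => x + t • (z - x)
  have hγ : ContDiff ℝ 1 γ := by fun_prop
  have hdγ : ∀ t, deriv γ t = z - x := fun t => by
    have := ((hasDerivAt_id t).smul_const (z - x)).const_add x
    rw [one_smul] at this
    exact this.deriv
  have hlen : curveLength (Lmet V E) γ ≤ M := by
    have hbound : ∀ t ∈ uIoc (0:ℝ) 1, ‖Lmet V E (γ t) (deriv γ t)‖ ≤ M := fun t ht => by
      rw [uIoc_of_le zero_le_one] at ht
      rw [hdγ, Real.norm_of_nonneg (Lmet_nonneg _ _)]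
      exact h _ (segment_eq_image' ℝ x z ▸ ⟨t, ⟨ht.1.le, ht.2⟩, rfl⟩)
    simpa [curveLength] using
      (le_abs_self _).trans (intervalIntegral.norm_integral_le_of_norm_le_const hbound)
  simpa [γ] using (agmonDist_le_curveLength hγ).trans hlen

lemma agmonDist_triangle (hV : Continuous V) (x z y : EuclideanSpace ℝ (Fin d)) :
    agmonDist V E x y ≤ agmonDist V E x z + agmonDist V E z y := by
  have hconcat : ∀ γ₁ γ₂, ContDiff ℝ 1 γ₁ → ContDiff ℝ 1 γ₂ → γ₁ 0 = x → γ₁ 1 = z → γ₂ 0 = z →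
      γ₂ 1 = y → agmonDist V E x y ≤ curveLength (Lmet V E) γ₁ + curveLength (Lmet V E) γ₂ := by
    intro γ₁ γ₂ h₁ h₂ h₁0 h₁1 h₂0 h₂1
    have hz : γ₁ 1 = γ₂ 0 := h₁1.trans h₂0.symm
    have := agmonDist_le_curveLength (V := V) (E := E) (contDiff_curveConcat h₁ h₂)
    rwa [curveConcat_zero, curveConcat_one hz, h₁0, h₂1, curveLength_curveConcat
      (fun _ _ _ hs => Lmet_smul hs _ _) (continuous_Lmet hV) h₁ h₂ hz] at this
  have : agmonDist V E x y - agmonDist V E z y ≤ agmonDist V E x z :=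
    le_agmonDist fun γ₁ h₁ h₁0 h₁1 => by
      have : agmonDist V E x y - curveLength (Lmet V E) γ₁ ≤ agmonDist V E z y :=
        le_agmonDist fun γ₂ h₂ h₂0 h₂1 => by linarith [hconcat γ₁ γ₂ h₁ h₂ h₁0 h₁1 h₂0 h₂1]
      linarith
  linarith

lemma distToSet_le_agmonDist_add (hV : Continuous V) (G : Set (EuclideanSpace ℝ (Fin d)))
    (x z : EuclideanSpace ℝ (Fin d)) :
    distToSet V E G x ≤ agmonDist V E x z + distToSet V E G z := by
  rcases G.eq_empty_or_nonempty with rfl | ⟨y₀, hy₀⟩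
  · simp [distToSet, agmonDist_nonneg]
  have hle : ∀ y ∈ G, distToSet V E G x ≤ agmonDist V E x y := fun y hy => by
    refine csInf_le ⟨0, ?_⟩ ⟨y, hy, rfl⟩
    rintro _ ⟨y', -, rfl⟩
    exact agmonDist_nonneg x y'
  have : distToSet V E G x - agmonDist V E x z ≤ distToSet V E G z := by
    refine le_csInf ⟨_, y₀, hy₀, rfl⟩ ?_
    rintro _ ⟨y, hy, rfl⟩
    linarith [hle y hy, agmonDist_triangle (E := E) hV x z y]
  linarith

lemma exists_lipschitzWith_distToSet (hV : Continuous V) (hVb : BddAbove (range V))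
    (G : Set (EuclideanSpace ℝ (Fin d))) : ∃ K, LipschitzWith K (distToSet V E G) := by
  obtain ⟨R, hR, hL⟩ := exists_Lmet_le (E := E) hVb
  refine ⟨R.toNNReal, LipschitzWith.of_le_add_mul _ fun x z => ?_⟩
  have hseg : agmonDist V E x z ≤ R * dist x z :=
    agmonDist_le_of_forall_mem_segment fun p _ => by
      rw [dist_eq_norm, ← norm_neg, neg_sub]; exact hL p _
  rw [Real.coe_toNNReal R hR]
  linarith [distToSet_le_agmonDist_add (E := E) hV G x z]

lemma neg_inner_gradient_distToSet_le (hV : Continuous V) {G : Set (EuclideanSpace ℝ (Fin d))}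
    {x : EuclideanSpace ℝ (Fin d)} (hd : DifferentiableAt ℝ (distToSet V E G) x)
    (h : EuclideanSpace ℝ (Fin d)) : -⟪gradient (distToSet V E G) x, h⟫ ≤ Lmet V E x h := by
  refine le_of_forall_pos_le_add fun ε hε => neg_inner_gradient_le_of_eventually_le hd h ?_
  have hLx : ∀ᶠ p in 𝓝 x, Lmet V E p h < Lmet V E x h + ε :=
    ((continuous_Lmet hV).comp (continuous_id.prodMk continuous_const)).continuousAt.eventually
      (gt_mem_nhds (lt_add_of_pos_right _ hε))
  obtain ⟨δ, hδ, hball⟩ := Metric.eventually_nhds_iff_ball.1 hLx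
  have hnear : ∀ᶠ s in 𝓝 (0:ℝ), x + s • h ∈ Metric.ball x δ :=
    (continuous_const.add (continuous_id.smul continuous_const)).continuousAt.eventually_mem
      (by simpa using Metric.ball_mem_nhds x hδ)
  filter_upwards [nhdsWithin_le_nhds hnear, self_mem_nhdsWithin] with s hs (hs₀ : 0 < s)
  have hseg : agmonDist V E x (x + s • h) ≤ s * (Lmet V E x h + ε) :=
    agmonDist_le_of_forall_mem_segment fun p hp => by
      rw [add_sub_cancel_left, Lmet_smul hs₀.le]
      exact mul_le_mul_of_nonneg_left
        (hball p ((convex_ball x δ).segment_subset (Metric.mem_ball_self hδ) hs hp)).le hs₀.le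
  linarith [distToSet_le_agmonDist_add (E := E) hV G x (x + s • h)]

lemma gradient_distToSet_mem_Kx_of_differentiableAt (hV : Continuous V)
    {G : Set (EuclideanSpace ℝ (Fin d))} {x : EuclideanSpace ℝ (Fin d)}
    (hd : DifferentiableAt ℝ (distToSet V E G) x) : gradient (distToSet V E G) x ∈ Kx V E x := by
  have hdual : ∀ w, ⟪gradient (distToSet V E G) x, w⟫ ≤ Lmet V E x w := fun w => by
    simpa [Lmet_neg] using neg_inner_gradient_distToSet_le hV hd (-w)
  simp only [Lmet_eq_supportFun] at hdual
  rw [Kx_eq_agmonBody]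
  exact mem_of_forall_inner_le_supportFun (convex_agmonBody (ι := Fin d) _)
    (isClosed_agmonBody (ι := Fin d) _) ⟨0, zero_mem_agmonBody (agmonLevel_nonneg V E x)⟩ hdual

end AgmonDistance

theorem gradient_distToSet_mem_Kx_general (d : ℕ) (V : EuclideanSpace ℝ (Fin d) → ℝ)
    (hV : Continuous V) (hVb : BddAbove (Set.range V)) (E : ℝ)
    (G : Set (EuclideanSpace ℝ (Fin d))) :
    (∀ x : EuclideanSpace ℝ (Fin d), DifferentiableAt ℝ (distToSet V E G) x →
      gradient (distToSet V E G) x ∈ Kx V E x) ∧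
    (∀ᵐ x ∂(MeasureTheory.volume : MeasureTheory.Measure (EuclideanSpace ℝ (Fin d))),
      DifferentiableAt ℝ (distToSet V E G) x ∧
        gradient (distToSet V E G) x ∈ Kx V E x) := by
  have hgrad : ∀ x, DifferentiableAt ℝ (distToSet V E G) x →
      gradient (distToSet V E G) x ∈ Kx V E x :=
    fun _ hx => gradient_distToSet_mem_Kx_of_differentiableAt hV hx
  obtain ⟨K, hK⟩ := exists_lipschitzWith_distToSet (E := E) hV hVb G
  exact ⟨hgrad, hK.ae_differentiableAt.mono fun x hx => ⟨hx, hgrad x hx⟩⟩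

/-- if `V` is continuous and bounded above and `𝒢` is closed, then at every
point where `d_𝒢` is differentiable its gradient lies in `K_x`; in particular this holds
almost everywhere (`d_𝒢` being Lipschitz). -/
theorem gradient_distToSet_mem_Kx (d : ℕ) (V : EuclideanSpace ℝ (Fin d) → ℝ)
    (hV : Continuous V) (hVb : BddAbove (Set.range V)) (E : ℝ)
    (G : Set (EuclideanSpace ℝ (Fin d))) (hG : IsClosed G) :
    (∀ x : EuclideanSpace ℝ (Fin d), DifferentiableAt ℝ (distToSet V E G) x →
      gradient (distToSet V E G) x ∈ Kx V E x) ∧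
    (∀ᵐ x ∂(MeasureTheory.volume : MeasureTheory.Measure (EuclideanSpace ℝ (Fin d))),
      DifferentiableAt ℝ (distToSet V E G) x ∧
        gradient (distToSet V E G) x ∈ Kx V E x) :=
  gradient_distToSet_mem_Kx_general d V hV hVb E G

end
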